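/- Fix k > 0, P, P₂ ∈ ℝ and measurable Γ, Γ̃, Γ₂ : [0,∞) → ℝ, each with ∫|·(y)|(1+y²)dν(y) < ∞. Define ρ(y) := (((1−ky)⁺)² − 1)·𝟙_{Γ(y) ≥ Γ̃(y)}. Then −1 ≤ ρ(y) ≤ 0 for every y ≥ 0, and (inf_{0≤u≤k} G₁(u,P,Γ,P₂,Γ₂)) − (inf_{0≤u≤k} G₁(u,P,Γ̃,P₂,Γ₂)) ≥ ∫ ρ(y)·(Γ(y) − Γ̃(y)) λ dν(y). -/
import Mathlib


open MeasureTheory Real Set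

/-- `G₁(u,P₁,Γ₁,P₂,Γ₂) := ∫ [(P₁+Γ₁(y))·(((1−uy)⁺)² − 1) + (P₂+Γ₂(y))·((1−uy)⁻)²] λ dν(y)
  + 2uP₁(b+λb_Y)`. -/
noncomputable def G1 (ν : Measure ℝ) (lam b P₁ P₂ : ℝ) (Γ₁ Γ₂ : ℝ → ℝ) (u : ℝ) : ℝ :=
  lam * ∫ y, ((P₁ + Γ₁ y) * ((max (1 - u * y) 0) ^ 2 - 1)
      + (P₂ + Γ₂ y) * (max (-(1 - u * y)) 0) ^ 2) ∂ν
    + 2 * u * P₁ * (b + lam * ∫ y, y ∂ν)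

lemma fm_bounds (u y : ℝ) (hu : 0 ≤ u) (hy : 0 ≤ y) :
    -1 ≤ (max (1 - u * y) 0) ^ 2 - 1 ∧ (max (1 - u * y) 0) ^ 2 - 1 ≤ 0 := by
  have h0 : (0:ℝ) ≤ max (1 - u * y) 0 := le_max_right _ _
  have h1 : max (1 - u * y) 0 ≤ 1 := max_le (by nlinarith) zero_le_one
  constructor <;> nlinarith

lemma int_abs_of (ν : Measure ℝ) {Γ : ℝ → ℝ} (hm : Measurable Γ)
    (hΓ : Integrable (fun y => |Γ y| * (1 + y ^ 2)) ν) : Integrable Γ ν := by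
  refine hΓ.mono' hm.aestronglyMeasurable (ae_of_all _ fun y => ?_)
  have h2 : (0:ℝ) ≤ y ^ 2 := sq_nonneg y
  rw [Real.norm_eq_abs]
  nlinarith [abs_nonneg (Γ y)]

lemma key_bound (k u y P₁ P₂ : ℝ) (Γ₁ Γ₂ : ℝ → ℝ) (hu0 : 0 ≤ u) (huk : u ≤ k) (hy : 0 ≤ y) :
    ‖(P₁ + Γ₁ y) * ((max (1 - u * y) 0) ^ 2 - 1) + (P₂ + Γ₂ y) * (max (-(1 - u * y)) 0) ^ 2‖ ≤
      |P₁| + |Γ₁ y| * (1 + y ^ 2) + k ^ 2 * |P₂| * y ^ 2 + k ^ 2 * (|Γ₂ y| * (1 + y ^ 2)) := by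
  have hk0 : 0 ≤ k := le_trans hu0 huk
  obtain ⟨hf1, hf2⟩ := fm_bounds u y hu0 hy
  have hfabs : |(max (1 - u * y) 0) ^ 2 - 1| ≤ 1 := abs_le.mpr ⟨by linarith, by linarith⟩
  have hg0 : (0:ℝ) ≤ max (-(1 - u * y)) 0 := le_max_right _ _
  have hgle : max (-(1 - u * y)) 0 ≤ k * y := by
    apply max_le (by nlinarith) (by positivity)
  have hg2 : (max (-(1 - u * y)) 0) ^ 2 ≤ k ^ 2 * y ^ 2 := by nlinarith
  calc ‖(P₁ + Γ₁ y) * ((max (1 - u * y) 0) ^ 2 - 1) + (P₂ + Γ₂ y) * (max (-(1 - u * y)) 0) ^ 2‖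
      ≤ |(P₁ + Γ₁ y) * ((max (1 - u * y) 0) ^ 2 - 1)| + |(P₂ + Γ₂ y) * (max (-(1 - u * y)) 0) ^ 2| :=
        abs_add_le _ _
    _ ≤ (|P₁| + |Γ₁ y|) * 1 + (|P₂| + |Γ₂ y|) * (k ^ 2 * y ^ 2) := by
        gcongr ?_ + ?_
        · rw [abs_mul]
          exact mul_le_mul (abs_add_le _ _) hfabs (abs_nonneg _)
            (by positivity)
        · rw [abs_mul, abs_of_nonneg (by positivity : (0:ℝ) ≤ (max (-(1 - u * y)) 0) ^ 2)]
          exact mul_le_mul (abs_add_le _ _) hg2 (by positivity) (by positivity)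
    _ ≤ |P₁| + |Γ₁ y| * (1 + y ^ 2) + k ^ 2 * |P₂| * y ^ 2 + k ^ 2 * (|Γ₂ y| * (1 + y ^ 2)) := by
        nlinarith [abs_nonneg (Γ₁ y), abs_nonneg (Γ₂ y), sq_nonneg y, sq_nonneg k,
          mul_nonneg (abs_nonneg (Γ₂ y)) (sq_nonneg k), mul_nonneg (sq_nonneg k) (abs_nonneg (Γ₂ y))]

lemma integ_main (ν : Measure ℝ) [IsProbabilityMeasure ν] (hν0 : ∀ᵐ y ∂ν, 0 ≤ y)
    (hy2 : Integrable (fun y => y ^ 2) ν) (k u P₁ P₂ : ℝ) (hu0 : 0 ≤ u) (huk : u ≤ k)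
    (Γ₁ Γ₂ : ℝ → ℝ) (hm1 : Measurable Γ₁) (hm2 : Measurable Γ₂)
    (hΓ₁ : Integrable (fun y => |Γ₁ y| * (1 + y ^ 2)) ν)
    (hΓ₂ : Integrable (fun y => |Γ₂ y| * (1 + y ^ 2)) ν) :
    Integrable (fun y => (P₁ + Γ₁ y) * ((max (1 - u * y) 0) ^ 2 - 1)
      + (P₂ + Γ₂ y) * (max (-(1 - u * y)) 0) ^ 2) ν := by
  have hB : Integrable (fun y => |P₁| + |Γ₁ y| * (1 + y ^ 2) + k ^ 2 * |P₂| * y ^ 2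
      + k ^ 2 * (|Γ₂ y| * (1 + y ^ 2))) ν := by
    exact (((integrable_const _).add hΓ₁).add
      ((hy2.const_mul (k ^ 2 * |P₂|)).congr (ae_of_all _ fun y => by ring))).add
      (hΓ₂.const_mul _)
  have hmeas : Measurable (fun y => (P₁ + Γ₁ y) * ((max (1 - u * y) 0) ^ 2 - 1)
      + (P₂ + Γ₂ y) * (max (-(1 - u * y)) 0) ^ 2) := by
    have hf : Measurable fun y : ℝ => (max (1 - u * y) 0) ^ 2 - 1 := by fun_prop
    have hg : Measurable fun y : ℝ => (max (-(1 - u * y)) 0) ^ 2 := by fun_prop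
    exact ((measurable_const.add hm1).mul hf).add ((measurable_const.add hm2).mul hg)
  refine hB.mono' hmeas.aestronglyMeasurable ?_
  · filter_upwards [hν0] with y hy using key_bound k u y P₁ P₂ Γ₁ Γ₂ hu0 huk hy

/-- with `ρ(y) = (((1−ky)⁺)² − 1)·𝟙_{Γ(y) ≥ Γ̃(y)}` one has `−1 ≤ ρ ≤ 0` on
`[0,∞)` and `inf_{0≤u≤k} G₁(·,Γ,·) − inf_{0≤u≤k} G₁(·,Γ̃,·) ≥ ∫ ρ(y)(Γ(y)−Γ̃(y)) λ dν(y)`. -/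
theorem stmt2 (ν : Measure ℝ) [IsProbabilityMeasure ν]
    (hν0 : ∀ᵐ y ∂ν, 0 ≤ y)
    (lam b : ℝ) (hlam : 0 < lam) (hb : 0 < b)
    (hy : Integrable (fun y => y) ν)
    (hy2 : Integrable (fun y => y ^ 2) ν)
    (hbY : 0 < ∫ y, y ∂ν)
    (k : ℝ) (hk : 0 < k)
    (P P₂ : ℝ) (Γ Γ' Γ₂ : ℝ → ℝ)
    (hΓm : Measurable Γ) (hΓ'm : Measurable Γ') (hΓ₂m : Measurable Γ₂)
    (hΓ : Integrable (fun y => |Γ y| * (1 + y ^ 2)) ν)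
    (hΓ' : Integrable (fun y => |Γ' y| * (1 + y ^ 2)) ν)
    (hΓ₂ : Integrable (fun y => |Γ₂ y| * (1 + y ^ 2)) ν)
    (ρ : ℝ → ℝ)
    (hρ : ∀ y, ρ y = if Γ' y ≤ Γ y then (max (1 - k * y) 0) ^ 2 - 1 else 0) :
    (∀ y : ℝ, 0 ≤ y → -1 ≤ ρ y ∧ ρ y ≤ 0) ∧
    sInf ((fun u => G1 ν lam b P P₂ Γ Γ₂ u) '' Set.Icc 0 k)
        - sInf ((fun u => G1 ν lam b P P₂ Γ' Γ₂ u) '' Set.Icc 0 k)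
      ≥ lam * ∫ y, ρ y * (Γ y - Γ' y) ∂ν := by
  have hρbd : ∀ y : ℝ, 0 ≤ y → -1 ≤ ρ y ∧ ρ y ≤ 0 := by
    intro y hy0
    rw [hρ]
    split_ifs with h
    · exact fm_bounds k y hk.le hy0
    · exact ⟨by norm_num, le_refl 0⟩
  refine ⟨hρbd, ?_⟩
  -- measurability of ρ
  have hρm : Measurable ρ := by
    have : ρ = fun y => if Γ' y ≤ Γ y then (max (1 - k * y) 0) ^ 2 - 1 else 0 := funext hρ
    rw [this]
    exact Measurable.ite (measurableSet_le hΓ'm hΓm) (by fun_prop) measurable_const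
  -- integrability of ρ * (Γ - Γ')
  have hΓi : Integrable Γ ν := int_abs_of ν hΓm hΓ
  have hΓ'i : Integrable Γ' ν := int_abs_of ν hΓ'm hΓ'
  have hbd : Integrable (fun y => |Γ y| + |Γ' y|) ν := hΓi.abs.add hΓ'i.abs
  have hρΓ : Integrable (fun y => ρ y * (Γ y - Γ' y)) ν := by
    refine hbd.mono' (hρm.mul (hΓm.sub hΓ'm)).aestronglyMeasurable ?_
    filter_upwards [hν0] with y hy0
    have h1 := hρbd y hy0
    have hra : |ρ y| ≤ 1 := abs_le.mpr ⟨h1.1, h1.2.trans zero_le_one⟩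
    rw [Real.norm_eq_abs, abs_mul]
    calc |ρ y| * |Γ y - Γ' y| ≤ 1 * |Γ y - Γ' y| :=
          mul_le_mul_of_nonneg_right hra (abs_nonneg _)
      _ ≤ |Γ y| + |Γ' y| := by rw [one_mul]; exact abs_sub _ _
  -- integrability of (Γ - Γ') * f_u for u ∈ [0,k]
  have hfint : ∀ u ∈ Set.Icc (0:ℝ) k,
      Integrable (fun y => (Γ y - Γ' y) * ((max (1 - u * y) 0) ^ 2 - 1)) ν := by
    intro u hu
    refine hbd.mono' ((hΓm.sub hΓ'm).mul (by fun_prop)).aestronglyMeasurable ?_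
    filter_upwards [hν0] with y hy0
    obtain ⟨hf1, hf2⟩ := fm_bounds u y hu.1 hy0
    have hfabs : |(max (1 - u * y) 0) ^ 2 - 1| ≤ 1 := abs_le.mpr ⟨by linarith, by linarith⟩
    rw [Real.norm_eq_abs, abs_mul]
    calc |Γ y - Γ' y| * |(max (1 - u * y) 0) ^ 2 - 1| ≤ |Γ y - Γ' y| * 1 :=
          mul_le_mul_of_nonneg_left hfabs (abs_nonneg _)
      _ ≤ |Γ y| + |Γ' y| := by rw [mul_one]; exact abs_sub _ _
  -- integrability of the G1 integrands
  have hIΓ : ∀ u ∈ Set.Icc (0:ℝ) k, Integrable (fun y => (P + Γ y) * ((max (1 - u * y) 0) ^ 2 - 1)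
      + (P₂ + Γ₂ y) * (max (-(1 - u * y)) 0) ^ 2) ν := fun u hu =>
    integ_main ν hν0 hy2 k u P P₂ hu.1 hu.2 Γ Γ₂ hΓm hΓ₂m hΓ hΓ₂
  have hIΓ' : ∀ u ∈ Set.Icc (0:ℝ) k, Integrable (fun y => (P + Γ' y) * ((max (1 - u * y) 0) ^ 2 - 1)
      + (P₂ + Γ₂ y) * (max (-(1 - u * y)) 0) ^ 2) ν := fun u hu =>
    integ_main ν hν0 hy2 k u P P₂ hu.1 hu.2 Γ' Γ₂ hΓ'm hΓ₂m hΓ' hΓ₂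
  set c : ℝ := lam * ∫ y, ρ y * (Γ y - Γ' y) ∂ν with hc
  -- key pointwise-in-u inequality
  have hkey : ∀ u ∈ Set.Icc (0:ℝ) k,
      c + G1 ν lam b P P₂ Γ' Γ₂ u ≤ G1 ν lam b P P₂ Γ Γ₂ u := by
    intro u hu
    have hdiff : G1 ν lam b P P₂ Γ Γ₂ u - G1 ν lam b P P₂ Γ' Γ₂ u
        = lam * ∫ y, (Γ y - Γ' y) * ((max (1 - u * y) 0) ^ 2 - 1) ∂ν := by
      unfold G1
      have hsub := integral_sub (hIΓ u hu) (hIΓ' u hu)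
      have heq : (fun y => ((P + Γ y) * ((max (1 - u * y) 0) ^ 2 - 1)
          + (P₂ + Γ₂ y) * (max (-(1 - u * y)) 0) ^ 2)
          - ((P + Γ' y) * ((max (1 - u * y) 0) ^ 2 - 1)
          + (P₂ + Γ₂ y) * (max (-(1 - u * y)) 0) ^ 2))
          = fun y => (Γ y - Γ' y) * ((max (1 - u * y) 0) ^ 2 - 1) := funext fun y => by ring
      rw [heq] at hsub
      rw [hsub]
      ring
    have hintle : ∫ y, ρ y * (Γ y - Γ' y) ∂ν
        ≤ ∫ y, (Γ y - Γ' y) * ((max (1 - u * y) 0) ^ 2 - 1) ∂ν := by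
      refine integral_mono_ae hρΓ (hfint u hu) ?_
      filter_upwards [hν0] with y hy0
      rw [hρ]
      split_ifs with h
      · have hm0 : (0:ℝ) ≤ max (1 - k * y) 0 := le_max_right _ _
        have hmle : max (1 - k * y) 0 ≤ max (1 - u * y) 0 :=
          max_le_max (by nlinarith [hu.1, hu.2, mul_le_mul_of_nonneg_right hu.2 hy0]) le_rfl
        have hsq : (max (1 - k * y) 0) ^ 2 ≤ (max (1 - u * y) 0) ^ 2 := by nlinarith
        nlinarith [h, hsq]
      · push_neg at h
        have hf2 := (fm_bounds u y hu.1 hy0).2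
        have : (0:ℝ) ≤ (Γ y - Γ' y) * ((max (1 - u * y) 0) ^ 2 - 1) := by nlinarith
        simpa using this
    have := mul_le_mul_of_nonneg_left hintle hlam.le
    linarith [hdiff ▸ this]
  -- lower bound on the Γ' branch, to get BddBelow
  set M : ℝ := ∫ y, (|P| + |Γ' y| * (1 + y ^ 2) + k ^ 2 * |P₂| * y ^ 2
      + k ^ 2 * (|Γ₂ y| * (1 + y ^ 2))) ∂ν with hM
  have hBint : Integrable (fun y => |P| + |Γ' y| * (1 + y ^ 2) + k ^ 2 * |P₂| * y ^ 2
      + k ^ 2 * (|Γ₂ y| * (1 + y ^ 2))) ν :=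
    (((integrable_const _).add hΓ').add
      ((hy2.const_mul (k ^ 2 * |P₂|)).congr (ae_of_all _ fun y => by ring))).add
      (hΓ₂.const_mul _)
  have hlow : ∀ u ∈ Set.Icc (0:ℝ) k,
      -(lam * M) - 2 * k * |P| * |b + lam * ∫ y, y ∂ν| ≤ G1 ν lam b P P₂ Γ' Γ₂ u := by
    intro u hu
    have hnorm : ‖∫ y, ((P + Γ' y) * ((max (1 - u * y) 0) ^ 2 - 1)
        + (P₂ + Γ₂ y) * (max (-(1 - u * y)) 0) ^ 2) ∂ν‖ ≤ M := by
      refine norm_integral_le_of_norm_le hBint ?_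
      filter_upwards [hν0] with y hy0 using key_bound k u y P P₂ Γ' Γ₂ hu.1 hu.2 hy0
    rw [Real.norm_eq_abs, abs_le] at hnorm
    have h2 : -(2 * k * |P| * |b + lam * ∫ y, y ∂ν|) ≤ 2 * u * P * (b + lam * ∫ y, y ∂ν) := by
      have h3 : |2 * u * P * (b + lam * ∫ y, y ∂ν)| ≤ 2 * k * |P| * |b + lam * ∫ y, y ∂ν| := by
        rw [abs_mul, abs_mul]
        have : |2 * u| ≤ 2 * k := by
          rw [abs_of_nonneg (by linarith [hu.1])]; linarith [hu.2]
        exact mul_le_mul_of_nonneg_right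
          (mul_le_mul_of_nonneg_right this (abs_nonneg _)) (abs_nonneg _)
      linarith [neg_abs_le (2 * u * P * (b + lam * ∫ y, y ∂ν))]
    unfold G1
    have h4 : -(lam * M) ≤ lam * ∫ y, ((P + Γ' y) * ((max (1 - u * y) 0) ^ 2 - 1)
        + (P₂ + Γ₂ y) * (max (-(1 - u * y)) 0) ^ 2) ∂ν := by
      rw [neg_le]
      calc -(lam * ∫ y, ((P + Γ' y) * ((max (1 - u * y) 0) ^ 2 - 1)
          + (P₂ + Γ₂ y) * (max (-(1 - u * y)) 0) ^ 2) ∂ν)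
          = lam * -(∫ y, ((P + Γ' y) * ((max (1 - u * y) 0) ^ 2 - 1)
          + (P₂ + Γ₂ y) * (max (-(1 - u * y)) 0) ^ 2) ∂ν) := by ring
        _ ≤ lam * M := mul_le_mul_of_nonneg_left (by linarith [hnorm.1]) hlam.le
    linarith
  have hne : (Set.Icc (0:ℝ) k).Nonempty := ⟨0, le_refl 0, hk.le⟩
  have hbdd : BddBelow ((fun u => G1 ν lam b P P₂ Γ' Γ₂ u) '' Set.Icc 0 k) := by
    refine ⟨-(lam * M) - 2 * k * |P| * |b + lam * ∫ y, y ∂ν|, ?_⟩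
    rintro x ⟨u, hu, rfl⟩
    exact hlow u hu
  have hfinal : c + sInf ((fun u => G1 ν lam b P P₂ Γ' Γ₂ u) '' Set.Icc 0 k)
      ≤ sInf ((fun u => G1 ν lam b P P₂ Γ Γ₂ u) '' Set.Icc 0 k) := by
    refine le_csInf (hne.image _) ?_
    rintro x ⟨u, hu, rfl⟩
    have h1 : sInf ((fun u => G1 ν lam b P P₂ Γ' Γ₂ u) '' Set.Icc 0 k)
        ≤ G1 ν lam b P P₂ Γ' Γ₂ u := csInf_le hbdd ⟨u, hu, rfl⟩
    linarith [hkey u hu]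
  linarith
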